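/- arXiv:2505.16316 — 3 statements merged into one kernel-verified Lean document; each statement's English description precedes it below -/
import Mathlib

section
/- Let K be a field of characteristic zero with derivation ∂, and let R be the differential polynomial ring K[x_0, x_1, x_2, …] with derivation δ extending ∂ and δ(x_i) = x_{i+1}. Suppose Θ ∈ R has the form Θ = a_n x_n + a_{n-1} x_{n-1} + ⋯ + a_0 x_0 + f with a_i ∈ K, a_n ≠ 0, and f ∈ (x_0)·R ∩ K[x_0,…,x_n] having zero linear part in x_n. Then for every s ≥ 0, δ^s(Θ) = a_n x_{n+s} + (terms in K[x_0,…,x_{n+s-1}] plus elements of the ideal (x_0)), i.e., the leading linear term of δ^s(Θ) is a_n x_{n+s}. -/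
/-!
Write `δ^s Θ = a_n x_{n+s} + g + x_0 p` with `g` involving only `x_0, …, x_{n+s-1}` and `p` only
`x_0, …, x_{n+s}`. Applying `δ` gives `a_n x_{n+s+1} + (∂a_n x_{n+s} + δg + x_1 p) + x_0 δp`, which
has the same shape one level up as soon as `n + s ≥ 1`. For `n = 0` the first step instead uses
that `f` is divisible by `x_0 ^ 2`.
-/

open MvPolynomial

namespace MvPolynomial

variable {σ R : Type*} [CommSemiring R] {s : Set σ}

theorem exists_eq_mul_mem_supported_of_dvd {g h : MvPolynomial σ R}
    (hg : g ∈ supported R s) (hh : h ∈ supported R s) (hdvd : h ∣ g) :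
    ∃ p ∈ supported R s, g = h * p := by
  rw [supported_eq_range_rename, AlgHom.mem_range] at hg hh
  obtain ⟨g', rfl⟩ := hg
  obtain ⟨h', rfl⟩ := hh
  obtain ⟨q, hq⟩ := hdvd
  have hinj : Function.Injective ((↑) : s → σ) := Subtype.val_injective
  refine ⟨rename (↑) (killCompl hinj q), by simp [supported_eq_range_rename], ?_⟩
  rw [← map_mul, ← killCompl_rename_app hinj h', ← map_mul, ← hq, killCompl_rename_app]

theorem X_dvd_of_mem_supported_singleton {i : σ} {p : MvPolynomial σ R}
    (hp : p ∈ supported R {i}) (h0 : coeff 0 p = 0) : X i ∣ p := by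
  rw [← Ideal.mem_span_singleton, ← Set.image_singleton, mem_ideal_span_X_image]
  intro m hm
  refine ⟨i, rfl, fun hmi => mem_support_iff.mp hm ?_⟩
  convert h0
  ext j
  by_cases hj : j = i
  · simpa [hj] using hmi
  · have : j ∉ p.vars := fun hv => hj (mem_supported.mp hp hv)
    rw [mem_vars_iff_mem_support] at this
    simpa using fun h => this ⟨m, hm, Finsupp.mem_support_iff.mpr h⟩

theorem X_mem_supported_of_mem {i : σ} (hi : i ∈ s) : (X i : MvPolynomial σ R) ∈ supported R s :=
  Algebra.subset_adjoin ⟨i, hi, rfl⟩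

theorem C_mem_supported (r : R) : C r ∈ supported R s :=
  (supported R s).algebraMap_mem r

end MvPolynomial

section DifferentialPolynomial

variable {K : Type*} [CommSemiring K]

structure IsDiffPolyDerivation (d : K → K) (δ : MvPolynomial ℕ K → MvPolynomial ℕ K) : Prop where
  map_add : ∀ p q, δ (p + q) = δ p + δ q
  map_mul : ∀ p q, δ (p * q) = p * δ q + δ p * q
  map_C : ∀ r, δ (C r) = C (d r)
  map_X : ∀ i, δ (X i) = X (i + 1)

namespace IsDiffPolyDerivation

variable {d : K → K} {δ : MvPolynomial ℕ K → MvPolynomial ℕ K}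

theorem map_mem_supported (hδ : IsDiffPolyDerivation d δ) {s t : Set ℕ} (hst : s ⊆ t)
    (hsucc : ∀ i ∈ s, i + 1 ∈ t) {q : MvPolynomial ℕ K} (hq : q ∈ supported K s) :
    δ q ∈ supported K t := by
  induction hq using Algebra.adjoin_induction with
  | mem x hx =>
    obtain ⟨i, hi, rfl⟩ := hx
    rw [hδ.map_X]
    exact X_mem_supported_of_mem (hsucc i hi)
  | algebraMap r =>
    rw [algebraMap_eq, hδ.map_C]
    exact C_mem_supported _
  | add x y _ _ hx hy => rw [hδ.map_add]; exact add_mem hx hy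
  | mul x y hx' hy' hx hy =>
    rw [hδ.map_mul]
    exact add_mem (mul_mem (supported_mono hst hx') hy) (mul_mem hx (supported_mono hst hy'))

end IsDiffPolyDerivation

def HasLeadingLinearTerm (c : K) (m : ℕ) (q : MvPolynomial ℕ K) : Prop :=
  ∃ g ∈ supported K (Set.Iio m), ∃ p ∈ supported K (Set.Iic m), q = C c * X m + g + X 0 * p

namespace HasLeadingLinearTerm

variable {d : K → K} {δ : MvPolynomial ℕ K → MvPolynomial ℕ K} {c : K} {m : ℕ}
  {q : MvPolynomial ℕ K}

theorem deriv (hδ : IsDiffPolyDerivation d δ) (hm : 1 ≤ m) (h : HasLeadingLinearTerm c m q) :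
    HasLeadingLinearTerm c (m + 1) (δ q) := by
  obtain ⟨g, hg, p, hp, rfl⟩ := h
  refine ⟨C (d c) * X m + δ g + X 1 * p, ?_, δ p, ?_, ?_⟩
  · refine add_mem (add_mem ?_ ?_) (mul_mem ?_ (supported_mono ?_ hp))
    · exact mul_mem (C_mem_supported _) (X_mem_supported_of_mem (Set.mem_Iio.mpr m.lt_succ_self))
    · exact hδ.map_mem_supported (Set.Iio_subset_Iio m.le_succ) (fun i hi => by simpa using hi) hg
    · exact X_mem_supported_of_mem (Set.mem_Iio.mpr (by omega))
    · exact fun i hi => Set.mem_Iio.mpr (Nat.lt_succ_of_le hi)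
  · exact hδ.map_mem_supported (Set.Iic_subset_Iic.mpr m.le_succ)
      (fun i hi => by simpa using hi) hp
  · simp only [hδ.map_add, hδ.map_mul, hδ.map_C, hδ.map_X]
    ring

theorem iterate (hδ : IsDiffPolyDerivation d δ) (hm : 1 ≤ m) (h : HasLeadingLinearTerm c m q)
    (s : ℕ) : HasLeadingLinearTerm c (m + s) (δ^[s] q) := by
  induction s with
  | zero => exact h
  | succ s ih =>
    rw [Function.iterate_succ_apply']
    exact ih.deriv hδ (hm.trans (Nat.le_add_right m s))

end HasLeadingLinearTerm

theorem hasLeadingLinearTerm_sum_add (n : ℕ) (a : ℕ → K) {f : MvPolynomial ℕ K}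
    (hf1 : X 0 ∣ f) (hf2 : f ∈ supported K (Set.Iic n)) :
    HasLeadingLinearTerm (a n) n ((∑ i ∈ Finset.range (n + 1), C (a i) * X i) + f) := by
  have hX0 : (X 0 : MvPolynomial ℕ K) ∈ supported K (Set.Iic n) :=
    X_mem_supported_of_mem (Set.mem_Iic.mpr n.zero_le)
  obtain ⟨p, hp, rfl⟩ := exists_eq_mul_mem_supported_of_dvd hf2 hX0 hf1
  refine ⟨∑ i ∈ Finset.range n, C (a i) * X i, sum_mem fun i hi => ?_, p, hp, ?_⟩
  · exact mul_mem (C_mem_supported _) (X_mem_supported_of_mem (Finset.mem_range.mp hi))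
  · rw [Finset.sum_range_succ]
    ring

/-- The vanishing `x_0`-coefficient makes `f` divisible by `x_0 ^ 2`, so that the term
`x_1 ∂f/∂x_0` of `δ f` still lies in `(x_0)`. -/
theorem IsDiffPolyDerivation.hasLeadingLinearTerm_map_C_mul_X_zero_add {d : K → K}
    {δ : MvPolynomial ℕ K → MvPolynomial ℕ K} (hδ : IsDiffPolyDerivation d δ) (c : K)
    {f : MvPolynomial ℕ K} (hf1 : X 0 ∣ f) (hf2 : f ∈ supported K (Set.Iic 0))
    (hflin : coeff (Finsupp.single 0 1) f = 0) :
    HasLeadingLinearTerm c 1 (δ (C c * X 0 + f)) := by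
  have hX0 : (X 0 : MvPolynomial ℕ K) ∈ supported K (Set.Iic 0) :=
    X_mem_supported_of_mem (Set.mem_Iic.mpr le_rfl)
  obtain ⟨p, hp, rfl⟩ := exists_eq_mul_mem_supported_of_dvd hf2 hX0 hf1
  have hp0 : coeff 0 p = 0 := by rwa [← add_zero (Finsupp.single 0 1), coeff_X_mul] at hflin
  have hpX0 : X 0 ∣ p := X_dvd_of_mem_supported_singleton
    (supported_mono (fun i (hi : i ≤ 0) => Nat.le_zero.mp hi) hp) hp0
  obtain ⟨r, hr, rfl⟩ := exists_eq_mul_mem_supported_of_dvd hp hX0 hpX0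
  refine ⟨C (d c) * X 0, ?_, X 1 * r + δ (X 0 * r), add_mem (mul_mem ?_ ?_) ?_, ?_⟩
  · exact mul_mem (C_mem_supported _) (X_mem_supported_of_mem (Set.mem_Iio.mpr zero_lt_one))
  · exact X_mem_supported_of_mem (Set.mem_Iic.mpr le_rfl)
  · exact supported_mono (Set.Iic_subset_Iic.mpr zero_le_one) hr
  · exact hδ.map_mem_supported (Set.Iic_subset_Iic.mpr zero_le_one) (by simp)
      (mul_mem hX0 hr)
  · simp only [hδ.map_add, hδ.map_mul (C c), hδ.map_mul (X 0) (X 0 * r), hδ.map_C, hδ.map_X]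
    ring

end DifferentialPolynomial

theorem stmt4_general {K : Type*} [Field K] (d : K → K)
    (δ : MvPolynomial ℕ K → MvPolynomial ℕ K)
    (hδadd : ∀ p q, δ (p + q) = δ p + δ q)
    (hδmul : ∀ p q, δ (p * q) = p * δ q + δ p * q)
    (hδC : ∀ r : K, δ (C r) = C (d r))
    (hδX : ∀ i : ℕ, δ (X i) = X (i + 1))
    (n : ℕ) (a : ℕ → K) (f : MvPolynomial ℕ K)
    (hf1 : f ∈ Ideal.span {(X 0 : MvPolynomial ℕ K)})
    (hf2 : f ∈ MvPolynomial.supported K {i : ℕ | i ≤ n})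
    (hflin : MvPolynomial.coeff (Finsupp.single n 1) f = 0)
    (Θ : MvPolynomial ℕ K)
    (hΘ : Θ = (∑ i ∈ Finset.range (n + 1), C (a i) * X i) + f) :
    ∀ s : ℕ, ∃ g1 g2 : MvPolynomial ℕ K,
      g1 ∈ MvPolynomial.supported K {i : ℕ | i ≤ n + s - 1} ∧
      g2 ∈ Ideal.span {(X 0 : MvPolynomial ℕ K)} ∧
      δ^[s] Θ = C (a n) * X (n + s) + g1 + g2 := by
  intro s
  have hδ : IsDiffPolyDerivation d δ := ⟨hδadd, hδmul, hδC, hδX⟩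
  rw [Ideal.mem_span_singleton] at hf1
  have hΘ_lead : HasLeadingLinearTerm (a n) (n + s) (δ^[s] Θ) := by
    rcases Nat.eq_zero_or_pos n with rfl | hn
    · cases s with
      | zero => exact hΘ ▸ hasLeadingLinearTerm_sum_add 0 a hf1 hf2
      | succ t =>
        have hΘ0 : Θ = C (a 0) * X 0 + f := by simp [hΘ]
        rw [Function.iterate_succ_apply, hΘ0, zero_add, add_comm]
        exact (hδ.hasLeadingLinearTerm_map_C_mul_X_zero_add (a 0) hf1 hf2 hflin).iterate hδ
          le_rfl t
    · exact (hΘ ▸ hasLeadingLinearTerm_sum_add n a hf1 hf2).iterate hδ hn s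
  obtain ⟨g, hg, p, -, hlead⟩ := hΘ_lead
  exact ⟨g, X 0 * p, supported_mono (fun i (hi : i < n + s) => show i ≤ n + s - 1 by omega) hg,
    Ideal.mem_span_singleton.mpr (dvd_mul_right _ _), hlead⟩

/-- The leading linear term of δ^s(Θ) is a_n x_{n+s}: if Θ = Σ a_i x_i + f with
a_n ≠ 0 and f ∈ (x_0) ∩ K[x_0,…,x_n] with zero linear part in x_n, then
δ^s(Θ) = a_n x_{n+s} + g_1 + g_2 with g_1 ∈ K[x_0,…,x_{n+s-1}] and g_2 ∈ (x_0). -/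
theorem stmt4 {K : Type*} [Field K] [CharZero K] (d : K → K)
    (hadd : ∀ a b : K, d (a + b) = d a + d b)
    (hleib : ∀ a b : K, d (a * b) = a * d b + d a * b)
    (δ : MvPolynomial ℕ K → MvPolynomial ℕ K)
    (hδadd : ∀ p q, δ (p + q) = δ p + δ q)
    (hδmul : ∀ p q, δ (p * q) = p * δ q + δ p * q)
    (hδC : ∀ r : K, δ (C r) = C (d r))
    (hδX : ∀ i : ℕ, δ (X i) = X (i + 1))
    (n : ℕ) (a : ℕ → K) (han : a n ≠ 0) (f : MvPolynomial ℕ K)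
    (hf1 : f ∈ Ideal.span {(X 0 : MvPolynomial ℕ K)})
    (hf2 : f ∈ MvPolynomial.supported K {i : ℕ | i ≤ n})
    (hflin : MvPolynomial.coeff (Finsupp.single n 1) f = 0)
    (Θ : MvPolynomial ℕ K)
    (hΘ : Θ = (∑ i ∈ Finset.range (n + 1), C (a i) * X i) + f) :
    ∀ s : ℕ, ∃ g1 g2 : MvPolynomial ℕ K,
      g1 ∈ MvPolynomial.supported K {i : ℕ | i ≤ n + s - 1} ∧
      g2 ∈ Ideal.span {(X 0 : MvPolynomial ℕ K)} ∧
      δ^[s] Θ = C (a n) * X (n + s) + g1 + g2 :=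
  stmt4_general d δ hδadd hδmul hδC hδX n a f hf1 hf2 hflin Θ hΘ
end

section
/- Let K be a field of characteristic zero with derivation ∂ and let V be a K-vector space with semilinear operator ∂ and filtration (V_n) such that ∂(V_n) ⊆ V_{n+1} and each nonzero v ∈ V_n \ V_{n−1} has ∂^s v ∈ V_{n+s} \ V_{n+s−1} for all s. Suppose B_i ⊆ V_i is a finite set whose image in V_i/(V_{i−1} + ∂V_{i−1} ∩ V_i) is linearly independent (where V_{−1} = 0). Then for all n ≥ i, the set S_n(B_i) = { ∂^h Θ : Θ ∈ B_i, 0 ≤ h ≤ n − i } is K-linearly independent in V_n. -/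
/-!
Take a relation `∑_{b,j} g(b,j) ∂^j b = 0` and let `h` be the largest `j` with a nonzero
coefficient; put `w = ∑_b g(b,h) b ∈ V_i`. If `h = 0` the relation says `w = 0`. Otherwise
semilinearity gives `∂^h w ≡ ∑_b g(b,h) ∂^h b` modulo `V_{i+h-1}`, and the relation puts the right
side in `V_{i+h-1}` as well. Since `∂` strictly raises the order of nonzero elements, `w` must
lie in `V_{i-1}` (or vanish), so its image in the quotient is zero and primitivity forces all
`g(b,h)` to vanish, contradicting the choice of `h`.
-/

namespace DerivationFiltration

variable {K V : Type*} [Field K] [AddCommGroup V] [Module K V]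
  {F : ℕ → Submodule K V} {D : V →+ V}

theorem iterate_map_sum {ι : Type*} (s : Finset ι) (f : ι → V) (k : ℕ) :
    D^[k] (∑ b ∈ s, f b) = ∑ b ∈ s, D^[k] (f b) :=
  map_sum ((show AddMonoid.End V from D) ^ k) f s

theorem iterate_mem (hDF : ∀ n, ∀ v ∈ F n, D v ∈ F (n + 1)) {m : ℕ} {v : V} (hv : v ∈ F m) :
    ∀ j, D^[j] v ∈ F (m + j)
  | 0 => hv
  | j + 1 => by
    rw [Function.iterate_succ_apply', ← add_assoc]
    exact hDF _ _ (iterate_mem hDF hv j)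

theorem iterate_smul_sub_smul_iterate_mem {dK : K → K}
    (hsemi : ∀ (c : K) (v : V), D (c • v) = c • D v + dK c • v)
    (hDF : ∀ n, ∀ v ∈ F n, D v ∈ F (n + 1)) (c : K) {m : ℕ} {v : V} (hv : v ∈ F m) :
    ∀ k, D^[k + 1] (c • v) - c • D^[k + 1] v ∈ F (m + k)
  | 0 => by simpa [hsemi] using F m |>.smul_mem (dK c) hv
  | k + 1 => by
    set r := D^[k + 1] (c • v) - c • D^[k + 1] v
    have hr : D^[k + 1] (c • v) = c • D^[k + 1] v + r := (add_sub_cancel _ _).symm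
    have key : D^[k + 2] (c • v) - c • D^[k + 2] v = dK c • D^[k + 1] v + D r := by
      rw [Function.iterate_succ_apply' _ (k + 1), Function.iterate_succ_apply' _ (k + 1), hr,
        map_add, hsemi]
      abel
    rw [key, ← add_assoc]
    exact add_mem (Submodule.smul_mem _ _ (iterate_mem hDF hv (k + 1)))
      (hDF _ _ (iterate_smul_sub_smul_iterate_mem hsemi hDF c hv k))

theorem iterate_sum_smul_sub_sum_smul_iterate_mem {dK : K → K}
    (hsemi : ∀ (c : K) (v : V), D (c • v) = c • D v + dK c • v)
    (hDF : ∀ n, ∀ v ∈ F n, D v ∈ F (n + 1)) {ι : Type*} [Fintype ι] (c : ι → K) {v : ι → V}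
    {m : ℕ} (hv : ∀ b, v b ∈ F m) (k : ℕ) :
    D^[k + 1] (∑ b, c b • v b) - ∑ b, c b • D^[k + 1] (v b) ∈ F (m + k) := by
  rw [iterate_map_sum, ← Finset.sum_sub_distrib]
  exact sum_mem fun b _ => iterate_smul_sub_smul_iterate_mem hsemi hDF (c b) (hv b) k

section Relation

variable {ι : Type*} [Fintype ι] {v : ι → V} {i N : ℕ} {c : Fin N → ι → K}

theorem iterate_top_mem_of_relation (hMono : Monotone F) {dK : K → K}
    (hsemi : ∀ (c : K) (v : V), D (c • v) = c • D v + dK c • v)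
    (hDF : ∀ n, ∀ v ∈ F n, D v ∈ F (n + 1)) (hv : ∀ b, v b ∈ F i)
    (hrel : ∑ j, ∑ b, c j b • D^[j] (v b) = 0) {h : Fin N} (htop : ∀ j, h < j → c j = 0)
    {k : ℕ} (hk : (h : ℕ) = k + 1) :
    D^[k + 1] (∑ b, c h b • v b) ∈ F (i + k) := by
  set T : Fin N → V := fun j => ∑ b, c j b • D^[j] (v b)
  have hTh : T h = -∑ j ∈ Finset.univ.erase h, T j :=
    eq_neg_of_add_eq_zero_left <| (Finset.add_sum_erase _ T (Finset.mem_univ h)).trans hrel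
  have hlower : ∀ j ∈ Finset.univ.erase h, T j ∈ F (i + k) := by
    intro j hj
    rcases lt_or_gt_of_ne (Finset.ne_of_mem_erase hj) with hlt | hgt
    · exact sum_mem fun b _ => Submodule.smul_mem _ _ <|
        hMono (by omega : i + j ≤ i + k) (iterate_mem hDF (hv b) j)
    · simp [T, htop j hgt]
  have hTmem : T h ∈ F (i + k) := hTh ▸ neg_mem (sum_mem hlower)
  simp only [T, hk] at hTmem
  simpa using add_mem (iterate_sum_smul_sub_sum_smul_iterate_mem hsemi hDF (c h) hv k) hTmem

theorem sum_smul_top_mem_of_relation (hMono : Monotone F) {dK : K → K}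
    (hsemi : ∀ (c : K) (v : V), D (c • v) = c • D v + dK c • v)
    (hDF : ∀ n, ∀ v ∈ F n, D v ∈ F (n + 1))
    (hStrict : ∀ (n : ℕ) (v : V), v ∈ F n → v ≠ 0 → (1 ≤ n → v ∉ F (n - 1)) →
      ∀ s : ℕ, 1 ≤ s → D^[s] v ∉ F (n + s - 1))
    (hv : ∀ b, v b ∈ F i) {W : Submodule K V} (hFW : 1 ≤ i → F (i - 1) ≤ W)
    (hrel : ∑ j, ∑ b, c j b • D^[j] (v b) = 0) {h : Fin N} (htop : ∀ j, h < j → c j = 0) :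
    ∑ b, c h b • v b ∈ W := by
  obtain ⟨_ | k, hkN⟩ := h
  · have hvanish : ∀ j ≠ ⟨0, hkN⟩, ∑ b, c j b • D^[j] (v b) = 0 := fun j hj => by
      simp [htop j (Fin.lt_def.mpr (Nat.pos_of_ne_zero fun h0 => hj (Fin.ext h0)))]
    have hw : ∑ b, c ⟨0, hkN⟩ b • v b = 0 := by
      simpa [Fintype.sum_eq_single _ hvanish] using hrel
    exact hw ▸ W.zero_mem
  · by_contra hW
    have hwF : ∑ b, c ⟨k + 1, hkN⟩ b • v b ∈ F i :=
      sum_mem fun b _ => Submodule.smul_mem _ _ (hv b)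
    refine hStrict i _ hwF (fun h0 => hW (h0 ▸ W.zero_mem)) (fun hi hlow => hW (hFW hi hlow))
      (k + 1) (by omega) ?_
    simpa using iterate_top_mem_of_relation hMono hsemi hDF hv hrel htop rfl

end Relation

theorem linearIndependent_iterate_of_linearIndependent_mkQ (hMono : Monotone F) {dK : K → K}
    (hsemi : ∀ (c : K) (v : V), D (c • v) = c • D v + dK c • v)
    (hDF : ∀ n, ∀ v ∈ F n, D v ∈ F (n + 1))
    (hStrict : ∀ (n : ℕ) (v : V), v ∈ F n → v ≠ 0 → (1 ≤ n → v ∉ F (n - 1)) →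
      ∀ s : ℕ, 1 ≤ s → D^[s] v ∉ F (n + s - 1))
    {ι : Type*} [Fintype ι] {v : ι → V} {i : ℕ} (hv : ∀ b, v b ∈ F i) {W : Submodule K V}
    (hFW : 1 ≤ i → F (i - 1) ≤ W)
    (hprim : LinearIndependent K (fun b => (Submodule.Quotient.mk (v b) : V ⧸ W))) (N : ℕ) :
    LinearIndependent K (fun p : ι × Fin N => D^[p.2] (v p.1)) := by
  classical
  rw [Fintype.linearIndependent_iff]
  intro g hg
  by_contra! hne
  obtain ⟨p, hp⟩ := hne
  obtain ⟨top, htop_ne, htop_max⟩ :=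
    Finset.exists_max_image {q | g q ≠ 0} Prod.snd ⟨p, by simpa using hp⟩
  have hrel : ∑ j, ∑ b, g (b, j) • D^[j] (v b) = 0 := by
    rwa [Fintype.sum_prod_type_right] at hg
  have hW := sum_smul_top_mem_of_relation hMono hsemi hDF hStrict hv hFW hrel
    (c := fun j b => g (b, j)) (h := top.2) fun j hj => funext fun b => by
      by_contra hb
      exact (htop_max (b, j) (by simpa using hb)).not_gt hj
  refine (Finset.mem_filter.mp htop_ne).2 ?_
  refine Fintype.linearIndependent_iff.mp hprim (fun b => g (b, top.2)) ?_ top.1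
  simpa only [← Submodule.mkQ_apply, map_sum, map_smul] using
    (Submodule.Quotient.mk_eq_zero W).mpr hW

end DerivationFiltration

open DerivationFiltration in
theorem stmt9_general {K V : Type*} [Field K] [AddCommGroup V] [Module K V]
    (dK : K → K)
    (F : ℕ → Submodule K V) (hMono : Monotone F)
    (D : V → V) (hDadd : ∀ x y : V, D (x + y) = D x + D y)
    (hsemi : ∀ (c : K) (v : V), D (c • v) = c • D v + dK c • v)
    (hDF : ∀ n, ∀ v ∈ F n, D v ∈ F (n + 1))
    (hStrict : ∀ (n : ℕ) (v : V), v ∈ F n → v ≠ 0 → (1 ≤ n → v ∉ F (n - 1)) →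
      ∀ i : ℕ, 1 ≤ i → D^[i] v ∈ F (n + i) ∧ D^[i] v ∉ F (n + i - 1))
    (i n : ℕ)
    (B : Finset V) (hB : ∀ b ∈ B, b ∈ F i)
    (W : Submodule K V)
    (hW : W = if i = 0 then ⊥ else
      F (i - 1) ⊔ Submodule.span K (D '' (F (i - 1) : Set V)))
    (hBprim : LinearIndependent K
      (fun b : B => (Submodule.Quotient.mk (b : V) : V ⧸ W))) :
    LinearIndependent K
      (fun p : B × Fin (n - i + 1) => D^[(p.2 : ℕ)] (p.1 : V)) := by
  have hFW : 1 ≤ i → F (i - 1) ≤ W := fun hi => by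
    rw [hW, if_neg (by omega)]
    exact le_sup_left
  exact linearIndependent_iterate_of_linearIndependent_mkQ (D := AddMonoidHom.mk' D hDadd) hMono
    hsemi hDF (fun n v hv hv0 hlow s hs => (hStrict n v hv hv0 hlow s hs).2)
    (v := ((↑) : B → V)) (fun b => hB b b.2) hFW hBprim (n - i + 1)

/-- Proposition 3.4: a primitive subset B_i of V_i (images linearly independent in
V_i/(V_{i-1} + ∂V_{i-1})) stays linearly independent after applying ∂ repeatedly:
S_n(B_i) = {∂^h Θ : Θ ∈ B_i, 0 ≤ h ≤ n-i} is K-linearly independent in V_n. -/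
theorem stmt9 {K V : Type*} [Field K] [CharZero K] [AddCommGroup V] [Module K V]
    (dK : K → K)
    (F : ℕ → Submodule K V) (hMono : Monotone F)
    (D : V → V) (hDadd : ∀ x y : V, D (x + y) = D x + D y)
    (hsemi : ∀ (c : K) (v : V), D (c • v) = c • D v + dK c • v)
    (hDF : ∀ n, ∀ v ∈ F n, D v ∈ F (n + 1))
    (hStrict : ∀ (n : ℕ) (v : V), v ∈ F n → v ≠ 0 → (1 ≤ n → v ∉ F (n - 1)) →
      ∀ i : ℕ, 1 ≤ i → D^[i] v ∈ F (n + i) ∧ D^[i] v ∉ F (n + i - 1))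
    (i n : ℕ) (hin : i ≤ n)
    (B : Finset V) (hB : ∀ b ∈ B, b ∈ F i)
    (W : Submodule K V)
    (hW : W = if i = 0 then ⊥ else
      F (i - 1) ⊔ Submodule.span K (D '' (F (i - 1) : Set V)))
    (hBprim : LinearIndependent K
      (fun b : B => (Submodule.Quotient.mk (b : V) : V ⧸ W))) :
    LinearIndependent K
      (fun p : B × Fin (n - i + 1) => D^[(p.2 : ℕ)] (p.1 : V)) :=
  stmt9_general dK F hMono D hDadd hsemi hDF hStrict i n B hB W hW hBprim
end

section
/- In the setting of the previous statement, if B_{i_1}, …, B_{i_k} are primitive subsets for V_{i_1}, …, V_{i_k} respectively with i_1 < i_2 < ⋯ < i_k ≤ n, then the union S_n(B_{i_1}) ∪ ⋯ ∪ S_n(B_{i_k}) is K-linearly independent in V_n. -/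
/-!
Every vector `∂ʰ b` with `b ∈ B_i` has exact order `i + h`, so it suffices to show, for each `m`,
that the vectors of order `m`, namely `∂^(m - i) b` with `i ≤ m`, are independent modulo `V_{m-1}`.
This goes by induction on `m`. The vectors coming from levels `i < m` are `∂` applied to those of
order `m - 1`; since `∂ (∑ cⱼ uⱼ) ≡ ∑ cⱼ ∂ uⱼ` modulo `V_{m-1}` and `∂` raises the exact order,
`∂` maps a family in `V_{m-1}` independent modulo `V_{m-2}` to one independent modulo `V_{m-1}`.
These vectors lie in `∂ V_{m-1}`, and the new primitive set `B_m` is independent modulo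
`V_{m-1} + ∂ V_{m-1}`.
-/

open Set Submodule

section Quotient

variable {R M ι : Type*} [Ring R] [AddCommGroup M] [Module R M] {v : ι → M} {s t : Set ι}

theorem LinearIndepOn.union_of_mkQ {q : Submodule R M} (hs : LinearIndepOn R v s)
    (hsq : v '' s ⊆ q) (ht : LinearIndepOn R (q.mkQ ∘ v) t) : LinearIndepOn R v (s ∪ t) :=
  hs.union_of_quotient (ht.of_comp (mapQ _ q LinearMap.id (span_le.2 hsq)))

theorem LinearIndepOn.mkQ_union_of_le {p q : Submodule R M} (hpq : p ≤ q)
    (hs : LinearIndepOn R (p.mkQ ∘ v) s) (hsq : v '' s ⊆ q)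
    (ht : LinearIndepOn R (q.mkQ ∘ v) t) : LinearIndepOn R (p.mkQ ∘ v) (s ∪ t) := by
  refine hs.union_of_mkQ (q := q.map p.mkQ) ?_ ?_
  · rw [image_comp]
    exact image_mono hsq |>.trans (image_subset_iff.2 fun x hx => mem_map_of_mem hx)
  · exact ht.of_comp (quotientQuotientEquivQuotient p q hpq).toLinearMap

theorem linearIndependent_of_linearIndepOn_mkQ_fibers (ord : ι → ℕ) (lower : ℕ → Submodule R M)
    (hlower : ∀ m i, ord i < m → v i ∈ lower m)
    (hfiber : ∀ m, LinearIndepOn R ((lower m).mkQ ∘ v) {i | ord i = m}) :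
    LinearIndependent R v := by
  have hbelow : ∀ N, LinearIndepOn R v {i | ord i < N} := by
    intro N
    induction N with
    | zero => simp [linearIndepOn_empty]
    | succ N ih =>
      have hsplit : {i | ord i < N + 1} = {i | ord i < N} ∪ {i | ord i = N} := by
        ext i; simp only [mem_ofPred_eq, mem_union]; omega
      rw [hsplit]
      exact ih.union_of_mkQ (image_subset_iff.2 fun i hi => hlower N i hi) (hfiber N)
  have hunion : (⋃ N, {i | ord i < N}) = univ :=
    eq_univ_of_forall fun i => mem_iUnion.2 ⟨ord i + 1, Nat.lt_succ_self _⟩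
  rw [← linearIndepOn_univ_iff, ← hunion]
  exact linearIndepOn_iUnion_of_directed
    (Monotone.directed_le fun _ _ h _ hi => lt_of_lt_of_le hi h) hbelow

theorem linearIndependent_mkQ_iff {p : Submodule R M} {u : ι → M} :
    LinearIndependent R (p.mkQ ∘ u) ↔
      ∀ (s : Finset ι) (g : ι → R), ∑ i ∈ s, g i • u i ∈ p → ∀ i ∈ s, g i = 0 := by
  simp_rw [linearIndependent_iff', Function.comp_apply, ← map_smul, ← map_sum, mkQ_apply,
    Quotient.mk_eq_zero]

theorem linearIndepOn_sigma_fiber {κ : ι → Type*} {idx : ι → ℕ} (hidx : Function.Injective idx) {W : ℕ → Submodule R M}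
    {x : Sigma κ → M} (h : ∀ j, LinearIndependent R ((W (idx j)).mkQ ∘ x ∘ Sigma.mk j))
    (ℓ : ℕ) : LinearIndepOn R ((W ℓ).mkQ ∘ x) {p | idx p.1 = ℓ} := by
  by_cases hℓ : ∃ j, idx j = ℓ
  · obtain ⟨j, rfl⟩ := hℓ
    have hfiber : {p : Sigma κ | idx p.1 = idx j} = range (Sigma.mk j) := by
      ext ⟨j', b⟩
      simp only [mem_ofPred_eq, mem_range]
      constructor
      · intro hj
        obtain rfl := hidx hj
        exact ⟨b, rfl⟩
      · rintro ⟨b', hb'⟩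
        cases hb'
        rfl
    rw [hfiber, linearIndepOn_range_iff sigma_mk_injective]
    exact h j
  · have hempty : {p : Sigma κ | idx p.1 = ℓ} = ∅ :=
      eq_empty_of_forall_notMem fun p hp => hℓ ⟨p.1, hp⟩
    rw [hempty]
    exact linearIndepOn_empty R _

end Quotient

namespace DifferentialFiltration

variable {K V : Type*} [Ring K] [AddCommGroup V] [Module K V]

/-- `below F m` is `F (m - 1)`, with the convention `F (-1) = 0`. -/
def below (F : ℕ → Submodule K V) : ℕ → Submodule K V
  | 0 => ⊥
  | m + 1 => F m

/-- The paper's `V_{ℓ-1} + ∂ V_{ℓ-1}`, modulo which a primitive subset of `V_ℓ` is independent. -/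
def derivedBelow (F : ℕ → Submodule K V) (D : V → V) : ℕ → Submodule K V
  | 0 => ⊥
  | m + 1 => F m ⊔ span K (D '' F m)

variable {F : ℕ → Submodule K V} {D : V → V}

theorem mem_below_of_lt (hF : Monotone F) {v : V} {a m : ℕ} (hv : v ∈ F a) (ham : a < m) :
    v ∈ below F m := by
  cases m with
  | zero => omega
  | succ m => exact hF (Nat.le_of_lt_succ ham) hv

theorem iterate_mem (hDF : ∀ n, ∀ v ∈ F n, D v ∈ F (n + 1)) {v : V} {a : ℕ} (hv : v ∈ F a)
    (i : ℕ) : D^[i] v ∈ F (a + i) := by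
  induction i with
  | zero => exact hv
  | succ i ih =>
    rw [Function.iterate_succ_apply']
    exact hDF _ _ ih

theorem mem_below_of_D_mem
    (hStrict : ∀ (m : ℕ) (v : V), v ∈ F m → v ≠ 0 → (1 ≤ m → v ∉ F (m - 1)) →
      ∀ i : ℕ, 1 ≤ i → D^[i] v ∈ F (m + i) ∧ D^[i] v ∉ F (m + i - 1))
    {v : V} {m : ℕ} (hv : v ∈ F m) (hDv : D v ∈ F m) : v ∈ below F m := by
  by_cases hv0 : v = 0
  · rw [hv0]
    exact zero_mem _
  cases m with
  | zero => exact absurd hDv (by simpa using (hStrict 0 v hv hv0 (by omega) 1 le_rfl).2)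
  | succ m =>
    by_contra hvm
    exact (hStrict (m + 1) v hv hv0 (fun _ => hvm) 1 le_rfl).2 (by simpa using hDv)

theorem D_sum_smul (dK : K → K) (hDadd : ∀ x y : V, D (x + y) = D x + D y)
    (hsemi : ∀ (c : K) (v : V), D (c • v) = c • D v + dK c • v) {ι : Type*} (s : Finset ι)
    (g : ι → K) (u : ι → V) :
    D (∑ i ∈ s, g i • u i) = ∑ i ∈ s, g i • D (u i) + ∑ i ∈ s, dK (g i) • u i := by
  rw [← Finset.sum_add_distrib, ← Finset.sum_congr rfl fun i _ => hsemi (g i) (u i)]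
  exact map_sum (AddMonoidHom.mk' D hDadd) _ s

theorem linearIndependent_mkQ_D (dK : K → K) (hDadd : ∀ x y : V, D (x + y) = D x + D y)
    (hsemi : ∀ (c : K) (v : V), D (c • v) = c • D v + dK c • v)
    {m : ℕ} (hord : ∀ v ∈ F m, D v ∈ F m → v ∈ below F m)
    {ι : Type*} {u : ι → V} (hu : ∀ i, u i ∈ F m)
    (hli : LinearIndependent K ((below F m).mkQ ∘ u)) :
    LinearIndependent K ((F m).mkQ ∘ D ∘ u) := by
  rw [linearIndependent_mkQ_iff] at hli ⊢
  intro s g hg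
  have hsum : ∑ i ∈ s, g i • u i ∈ F m := sum_mem fun i _ => smul_mem _ _ (hu i)
  have hDsum : D (∑ i ∈ s, g i • u i) ∈ F m := by
    rw [D_sum_smul dK hDadd hsemi]
    exact add_mem hg (sum_mem fun i _ => smul_mem _ _ (hu i))
  exact hli s g (hord _ hsum hDsum)

theorem linearIndepOn_mkQ_below_iterate (dK : K → K) (hF : Monotone F)
    (hDadd : ∀ x y : V, D (x + y) = D x + D y)
    (hsemi : ∀ (c : K) (v : V), D (c • v) = c • D v + dK c • v)
    (hDF : ∀ n, ∀ v ∈ F n, D v ∈ F (n + 1))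
    (hord : ∀ m, ∀ v ∈ F m, D v ∈ F m → v ∈ below F m)
    {P : Type*} {lvl : P → ℕ} {x : P → V} (hx : ∀ p, x p ∈ F (lvl p))
    (hprim : ∀ ℓ, LinearIndepOn K ((derivedBelow F D ℓ).mkQ ∘ x) {p | lvl p = ℓ}) (m : ℕ) :
    LinearIndepOn K ((below F m).mkQ ∘ fun p => D^[m - lvl p] (x p)) {p | lvl p ≤ m} := by
  induction m with
  | zero =>
    have hzero : {p | lvl p ≤ 0} = {p | lvl p = 0} := by
      ext p
      simp
    rw [hzero]
    exact (hprim 0).congr fun p _ => by simp; rfl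
  | succ m ih =>
    have hmem : ∀ p ∈ {p | lvl p ≤ m}, D^[m - lvl p] (x p) ∈ F m := fun p hp =>
      hF (by simp only [mem_ofPred_eq] at hp; omega) (iterate_mem hDF (hx p) _)
    have hstep : EqOn (D ∘ fun p => D^[m - lvl p] (x p)) (fun p => D^[m + 1 - lvl p] (x p))
        {p | lvl p ≤ m} := fun p hp => by
      simp only [mem_ofPred_eq] at hp
      show D (D^[m - lvl p] (x p)) = D^[m + 1 - lvl p] (x p)
      rw [show m + 1 - lvl p = m - lvl p + 1 by omega, Function.iterate_succ_apply']
    have hsplit : {p | lvl p ≤ m + 1} = {p | lvl p ≤ m} ∪ {p | lvl p = m + 1} := by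
      ext p
      simp only [mem_ofPred_eq, mem_union]
      omega
    rw [hsplit]
    refine LinearIndepOn.mkQ_union_of_le (q := derivedBelow F D (m + 1)) le_sup_left ?_ ?_ ?_
    · have hD : LinearIndepOn K ((F m).mkQ ∘ D ∘ fun p => D^[m - lvl p] (x p)) {p | lvl p ≤ m} :=
        linearIndependent_mkQ_D dK hDadd hsemi (hord m) (fun p => hmem p p.2) ih
      exact hD.congr fun p hp => congrArg (F m).mkQ (hstep hp)
    · rintro _ ⟨p, hp, rfl⟩
      rw [← hstep hp]
      exact mem_sup_right (subset_span ⟨_, hmem p hp, rfl⟩)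
    · exact (hprim (m + 1)).congr fun p hp => by simp_all

end DifferentialFiltration

open DifferentialFiltration

theorem stmt10_general {K V : Type*} [Field K] [AddCommGroup V] [Module K V]
    (dK : K → K)
    (F : ℕ → Submodule K V) (hMono : Monotone F)
    (D : V → V) (hDadd : ∀ x y : V, D (x + y) = D x + D y)
    (hsemi : ∀ (c : K) (v : V), D (c • v) = c • D v + dK c • v)
    (hDF : ∀ n, ∀ v ∈ F n, D v ∈ F (n + 1))
    (hStrict : ∀ (m : ℕ) (v : V), v ∈ F m → v ≠ 0 → (1 ≤ m → v ∉ F (m - 1)) →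
      ∀ i : ℕ, 1 ≤ i → D^[i] v ∈ F (m + i) ∧ D^[i] v ∉ F (m + i - 1))
    (k n : ℕ) (idx : Fin k → ℕ) (hidx : StrictMono idx)
    (B : Fin k → Finset V) (hB : ∀ j, ∀ b ∈ B j, b ∈ F (idx j))
    (W : Fin k → Submodule K V)
    (hW : ∀ j, W j = if idx j = 0 then ⊥ else
      F (idx j - 1) ⊔ Submodule.span K (D '' (F (idx j - 1) : Set V)))
    (hBprim : ∀ j, LinearIndependent K
      (fun b : B j => (Submodule.Quotient.mk (b : V) : V ⧸ W j))) :
    LinearIndependent K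
      (fun p : (j : Fin k) × ((B j) × Fin (n - idx j + 1)) =>
        D^[(p.2.2 : ℕ)] (p.2.1 : V)) := by
  have hWj : ∀ j, W j = derivedBelow F D (idx j) := fun j => by
    rw [hW j]
    rcases idx j with _ | ℓ <;> rfl
  have hcore := linearIndepOn_mkQ_below_iterate dK hMono hDadd hsemi hDF
    (fun _ _ => mem_below_of_D_mem hStrict)
    (lvl := fun p : (j : Fin k) × B j => idx p.1) (x := fun p => p.2)
    (fun p => hB p.1 p.2 p.2.2)
    (linearIndepOn_sigma_fiber hidx.injective fun j => hWj j ▸ hBprim j)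
  refine linearIndependent_of_linearIndepOn_mkQ_fibers (fun p => idx p.1 + p.2.2) (below F)
    (fun m p hp => mem_below_of_lt hMono (iterate_mem hDF (hB _ _ p.2.1.2) _) hp) fun m => ?_
  have hinj : InjOn (fun p : (j : Fin k) × (B j × Fin (n - idx j + 1)) =>
      (⟨p.1, p.2.1⟩ : (j : Fin k) × B j)) {p | idx p.1 + p.2.2 = m} := by
    rintro ⟨j, b, h⟩ hp ⟨j', b', h'⟩ hp' heq
    simp only [mem_ofPred_eq] at hp hp'
    cases heq
    obtain rfl : h = h' := Fin.ext (by omega)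
    rfl
  refine ((hcore m).mono ?_ |>.comp_of_image hinj).congr fun p hp => ?_
  · rintro _ ⟨p, hp, rfl⟩
    simp only [mem_ofPred_eq] at hp ⊢
    omega
  · simp only [mem_ofPred_eq] at hp
    simp only [Function.comp_apply, ← hp, Nat.add_sub_cancel_left]

/-- Proposition 3.5: if B_{i_1}, …, B_{i_k} are primitive subsets for
V_{i_1}, …, V_{i_k} with i_1 < ⋯ < i_k ≤ n, then
S_n(B_{i_1}) ∪ ⋯ ∪ S_n(B_{i_k}) is K-linearly independent in V_n. -/
theorem stmt10 {K V : Type*} [Field K] [CharZero K] [AddCommGroup V] [Module K V]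
    (dK : K → K)
    (F : ℕ → Submodule K V) (hMono : Monotone F)
    (D : V → V) (hDadd : ∀ x y : V, D (x + y) = D x + D y)
    (hsemi : ∀ (c : K) (v : V), D (c • v) = c • D v + dK c • v)
    (hDF : ∀ n, ∀ v ∈ F n, D v ∈ F (n + 1))
    (hStrict : ∀ (m : ℕ) (v : V), v ∈ F m → v ≠ 0 → (1 ≤ m → v ∉ F (m - 1)) →
      ∀ i : ℕ, 1 ≤ i → D^[i] v ∈ F (m + i) ∧ D^[i] v ∉ F (m + i - 1))
    (k n : ℕ) (idx : Fin k → ℕ) (hidx : StrictMono idx)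
    (hidxn : ∀ j, idx j ≤ n)
    (B : Fin k → Finset V) (hB : ∀ j, ∀ b ∈ B j, b ∈ F (idx j))
    (W : Fin k → Submodule K V)
    (hW : ∀ j, W j = if idx j = 0 then ⊥ else
      F (idx j - 1) ⊔ Submodule.span K (D '' (F (idx j - 1) : Set V)))
    (hBprim : ∀ j, LinearIndependent K
      (fun b : B j => (Submodule.Quotient.mk (b : V) : V ⧸ W j))) :
    LinearIndependent K
      (fun p : (j : Fin k) × ((B j) × Fin (n - idx j + 1)) =>
        D^[(p.2.2 : ℕ)] (p.2.1 : V)) :=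
  stmt10_general dK F hMono D hDadd hsemi hDF hStrict k n idx hidx B hB W hW hBprim
end
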